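/- Let σ be a positive natural number, δt ∈ ℝ and c ∈ ℝ. For u ∈ L²(ℝ; ℂ), define the Lie splitting step: ũ(x) := exp(i δt |u(x)|^{2σ}) u(x) and u' := 𝓕⁻¹(ξ ↦ e^{−i c |ξ|²} · 𝓕ũ(ξ)). Then ũ ∈ L²(ℝ; ℂ) and the discrete charge conservation law holds: ‖u'‖_{L²} = ‖u‖_{L²} (Proposition 3.4, charge conservation of the Lie splitting scheme, applied pathwise with c the Brownian increment δW_n). -/

import Mathlib

open MeasureTheory Complex Real
open scoped ENNReal NNReal FourierTransform ComplexConjugate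

noncomputable section

/-- `L²(ℝ; ℂ)`. -/
abbrev L2 : Type := Lp ℂ 2 (volume : Measure ℝ)

/-- `F` is the Fourier–Plancherel transform on `L²(ℝ; ℂ)`: a unitary operator that agrees
with the Fourier integral `𝓕 f (ξ) = ∫ e^{−2πixξ} f(x) dx` on `L¹ ∩ L²`. -/
def IsFourierPlancherel (F : L2 ≃ₗᵢ[ℂ] L2) : Prop :=
  ∀ (f : ℝ → ℂ) (_ : Integrable f (volume : Measure ℝ))
    (hf2 : MemLp f 2 (volume : Measure ℝ)),
    (F (hf2.toLp f) : ℝ → ℂ) =ᵐ[volume] 𝓕 f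

/-- Multiplication by a bounded continuous symbol maps `L²` to `L²`. -/
lemma memℒp_mul_symbol (m : ℝ → ℂ) (hm : Continuous m) (hm1 : ∀ ξ, ‖m ξ‖ ≤ 1)
    (g : L2) : MemLp (fun ξ => m ξ * (g : ℝ → ℂ) ξ) 2 (volume : Measure ℝ) := by
  refine ⟨hm.aestronglyMeasurable.mul (Lp.aestronglyMeasurable g), ?_⟩
  refine lt_of_le_of_lt (eLpNorm_mono fun x => ?_) (Lp.eLpNorm_lt_top g)
  rw [norm_mul]
  calc ‖m x‖ * ‖(g : ℝ → ℂ) x‖ ≤ 1 * ‖(g : ℝ → ℂ) x‖ := by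
        gcongr; exact hm1 x
    _ = ‖(g : ℝ → ℂ) x‖ := one_mul _

/-- The Fourier multiplier operator `f ↦ 𝓕⁻¹ (m ⬝ 𝓕 f)` with bounded continuous symbol. -/
def fourierMult (F : L2 ≃ₗᵢ[ℂ] L2) (m : ℝ → ℂ) (hm : Continuous m)
    (hm1 : ∀ ξ, ‖m ξ‖ ≤ 1) (f : L2) : L2 :=
  F.symm ((memℒp_mul_symbol m hm hm1 (F f)).toLp _)

/-- The squared `H^s` norm `‖f‖²_{H^s} = ∫ (1+|ξ|²)^s |𝓕f(ξ)|² dξ ∈ [0,∞]`. -/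
def HsNormSq (F : L2 ≃ₗᵢ[ℂ] L2) (s : ℝ) (f : L2) : ℝ≥0∞ :=
  ∫⁻ ξ : ℝ, ENNReal.ofReal ((1 + |ξ| ^ 2) ^ s) * (‖(F f : ℝ → ℂ) ξ‖₊ : ℝ≥0∞) ^ 2

/-- The `H^s` norm `‖f‖_{H^s} ∈ [0,∞]`. -/
def HsNorm (F : L2 ≃ₗᵢ[ℂ] L2) (s : ℝ) (f : L2) : ℝ≥0∞ :=
  HsNormSq F s f ^ (1 / 2 : ℝ)

lemma Sprop_symbol_cont (τ : ℝ) :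
    Continuous fun ξ : ℝ => Complex.exp (-Complex.I * (τ : ℂ) * (ξ : ℂ) ^ 2) := by
  fun_prop

lemma Sprop_symbol_norm (τ : ℝ) (ξ : ℝ) :
    ‖Complex.exp (-Complex.I * (τ : ℂ) * (ξ : ℂ) ^ 2)‖ ≤ 1 := by
  have h : -Complex.I * (τ : ℂ) * (ξ : ℂ) ^ 2 = ((-(τ * ξ ^ 2) : ℝ) : ℂ) * Complex.I := by
    push_cast; ring
  rw [h, Complex.norm_exp_ofReal_mul_I]

/-- The linear propagator `S_τ = 𝓕⁻¹ e^{−iτ|ξ|²} 𝓕` of `i du + Δu ∘ dW = 0`. -/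
def Sprop (F : L2 ≃ₗᵢ[ℂ] L2) (τ : ℝ) : L2 → L2 :=
  fourierMult F (fun ξ : ℝ => Complex.exp (-Complex.I * (τ : ℂ) * (ξ : ℂ) ^ 2))
    (Sprop_symbol_cont τ) (Sprop_symbol_norm τ)

/-! Both substeps of the Lie splitting preserve the modulus pointwise in the right variable:
the nonlinear step multiplies `u(x)` by the unimodular factor `exp(i δt |u(x)|^{2σ})`, and the
linear step multiplies `𝓕ũ(ξ)` by the unimodular symbol `e^{−ic|ξ|²}`, sandwiched between the
isometries `𝓕` and `𝓕⁻¹` of `L²`. -/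

section PointwiseIsometry

variable {E G : Type*} [NormedAddCommGroup E] [NormedAddCommGroup G]
  {α : Type*} [MeasurableSpace α] {μ : Measure α} {p : ℝ≥0∞}

lemma memLp_comp_of_norm_map_eq {Φ : E → G} (hΦ : Continuous Φ) (hnorm : ∀ z, ‖Φ z‖ = ‖z‖)
    (f : Lp E p μ) : MemLp (Φ ∘ f) p μ :=
  (Lp.memLp f).congr_norm (hΦ.comp_aestronglyMeasurable (Lp.aestronglyMeasurable f))
    (Filter.Eventually.of_forall fun x => (hnorm (f x)).symm)

lemma norm_toLp_of_norm_ae_eq {g : α → G} (hg : MemLp g p μ) (f : Lp E p μ)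
    (h : ∀ᵐ x ∂μ, ‖g x‖ = ‖f x‖) : ‖hg.toLp g‖ = ‖f‖ := by
  rw [Lp.norm_toLp, eLpNorm_congr_norm_ae h, Lp.norm_def]

end PointwiseIsometry

lemma norm_exp_I_mul_ofReal_mul (θ : ℝ) (z : ℂ) : ‖exp (I * θ) * z‖ = ‖z‖ := by
  rw [norm_mul, mul_comm I, Complex.norm_exp_ofReal_mul_I, one_mul]

lemma norm_fourierMult_of_norm_eq_one (F : L2 ≃ₗᵢ[ℂ] L2) {m : ℝ → ℂ} (hm : Continuous m)
    (hm1 : ∀ ξ, ‖m ξ‖ ≤ 1) (hm_unit : ∀ ξ, ‖m ξ‖ = 1) (f : L2) :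
    ‖fourierMult F m hm hm1 f‖ = ‖f‖ := by
  rw [fourierMult, F.symm.norm_map, ← F.norm_map f]
  refine norm_toLp_of_norm_ae_eq _ _ (Filter.Eventually.of_forall fun ξ => ?_)
  rw [norm_mul, hm_unit, one_mul]

lemma norm_Sprop (F : L2 ≃ₗᵢ[ℂ] L2) (τ : ℝ) (f : L2) : ‖Sprop F τ f‖ = ‖f‖ := by
  refine norm_fourierMult_of_norm_eq_one F _ _ (fun ξ => ?_) f
  have hphase : -I * (τ : ℂ) * (ξ : ℂ) ^ 2 = I * ((-(τ * ξ ^ 2) : ℝ) : ℂ) := by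
    push_cast; ring
  rw [hphase, mul_comm I, Complex.norm_exp_ofReal_mul_I]

def nonlinearStep (δt : ℝ) (σ : ℕ) (z : ℂ) : ℂ :=
  exp (I * (δt : ℂ) * ((normSq z : ℝ) : ℂ) ^ σ) * z

lemma continuous_nonlinearStep (δt : ℝ) (σ : ℕ) : Continuous (nonlinearStep δt σ) := by
  unfold nonlinearStep
  fun_prop

lemma norm_nonlinearStep (δt : ℝ) (σ : ℕ) (z : ℂ) : ‖nonlinearStep δt σ z‖ = ‖z‖ := by
  have hphase : I * (δt : ℂ) * ((normSq z : ℝ) : ℂ) ^ σ = I * ((δt * normSq z ^ σ : ℝ) : ℂ) := by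
    push_cast; ring
  rw [nonlinearStep, hphase, norm_exp_I_mul_ofReal_mul]

theorem stmt_11_general (F : L2 ≃ₗᵢ[ℂ] L2)
    (σ : ℕ) (δt : ℝ) (c : ℝ) (u : L2)
    (utld : ℝ → ℂ)
    (hutld : ∀ x : ℝ, utld x
      = Complex.exp (Complex.I * (δt : ℂ) * ((Complex.normSq ((u : ℝ → ℂ) x) : ℝ) : ℂ) ^ σ)
        * (u : ℝ → ℂ) x) :
    MemLp utld 2 (volume : Measure ℝ)
    ∧ ∀ h : MemLp utld 2 (volume : Measure ℝ),
        ‖Sprop F c (h.toLp utld)‖ = ‖u‖ := by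
  have hutld_comp : utld = nonlinearStep δt σ ∘ u := funext hutld
  have hnorm : ∀ᵐ x, ‖utld x‖ = ‖(u : ℝ → ℂ) x‖ :=
    Filter.Eventually.of_forall fun x => by rw [hutld_comp, Function.comp_apply, norm_nonlinearStep]
  refine ⟨hutld_comp ▸ memLp_comp_of_norm_map_eq (continuous_nonlinearStep δt σ)
    (norm_nonlinearStep δt σ) u, fun h => ?_⟩
  rw [norm_Sprop]
  exact norm_toLp_of_norm_ae_eq h u hnorm

/-- discrete charge conservation of the Lie splitting scheme: the nonlinear
step `ũ(x) = exp(i δt |u(x)|^{2σ}) u(x)` stays in `L²`, and the full step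
`u' = 𝓕⁻¹(e^{−ic|ξ|²} 𝓕 ũ)` satisfies `‖u'‖_{L²} = ‖u‖_{L²}`. -/
theorem stmt_11 (F : L2 ≃ₗᵢ[ℂ] L2) (hF : IsFourierPlancherel F)
    (σ : ℕ) (hσ : 0 < σ) (δt : ℝ) (c : ℝ) (u : L2)
    (utld : ℝ → ℂ)
    (hutld : ∀ x : ℝ, utld x
      = Complex.exp (Complex.I * (δt : ℂ) * ((Complex.normSq ((u : ℝ → ℂ) x) : ℝ) : ℂ) ^ σ)
        * (u : ℝ → ℂ) x) :
    MemLp utld 2 (volume : Measure ℝ)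
    ∧ ∀ h : MemLp utld 2 (volume : Measure ℝ),
        ‖Sprop F c (h.toLp utld)‖ = ‖u‖ :=
  stmt_11_general F σ δt c u utld hutld

end
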